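/- For φ = [[x+aw, y+bw],[z+cw, x+dw]] with a,b,c,d ∈ ℂ, the square of ε(φ) = d−a equals the determinant of the matrix of second partial derivatives (divided appropriately): (d−a)² = det [[2,0,0,a+d],[0,0,−1,−c],[0,−1,0,−b],[a+d,−c,−b,2(ad−bc)]]. That is, ε(φ)² = ρ(φ). -/

import Mathlib

/-!
In `φ₁₁ ∧ φ₂₂ = (x + a w) ∧ (x + d w)` the `x ∧ x` and `w ∧ w` terms vanish, leaving
`(d - a) x ∧ w`; this factor `w` then kills the `w`-components of `φ₁₂` and `φ₂₁`, so
`ε = d - a`. The coefficient of `x ∧ y ∧ z ∧ w` is read off by the determinant, viewed as a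
linear functional on the exterior algebra, and the `4 × 4` determinant expands to `(d - a)²`.
-/

namespace ExteriorAlgebra

variable {R M : Type*} [CommRing R] [AddCommGroup M] [Module R M]

theorem ι_mul_ι_swap (x y : M) : ι R x * ι R y = -(ι R y * ι R x) :=
  eq_neg_of_add_eq_zero_left (ι_add_mul_swap x y)

theorem ι_mul_ι_add_smul_self (v w : M) (b : R) :
    ι R w * ι R (v + b • w) = ι R w * ι R v := by
  rw [map_add, map_smul, mul_add, mul_smul_comm, ι_sq_zero, smul_zero, add_zero]

theorem ι_add_smul_mul_ι_add_smul (x w : M) (a d : R) :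
    ι R (x + a • w) * ι R (x + d • w) = (d - a) • (ι R x * ι R w) := by
  simp only [map_add, map_smul, add_mul, mul_add, smul_mul_assoc, mul_smul_comm, ι_sq_zero,
    ι_mul_ι_swap w x, smul_zero, add_zero, zero_add]
  module

theorem ι_add_smul_mul_ι_add_smul_mul_four (x y z w : M) (a b c d : R) :
    ι R (x + a • w) * ι R (x + d • w) * ι R (y + b • w) * ι R (z + c • w) =
      (d - a) • (ι R x * ι R y * ι R z * ι R w) := by
  calc _ = (d - a) • (ι R x * (ι R w * ι R (y + b • w)) * ι R (z + c • w)) := by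
        rw [ι_add_smul_mul_ι_add_smul, smul_mul_assoc, smul_mul_assoc, ← mul_assoc]
    _ = -(d - a) • (ι R x * ι R y * (ι R w * ι R (z + c • w))) := by
        rw [ι_mul_ι_add_smul_self, ι_mul_ι_swap w y]
        simp only [mul_neg, neg_mul, neg_smul, smul_neg, mul_assoc]
    _ = _ := by
        rw [ι_mul_ι_add_smul_self, ι_mul_ι_swap w z]
        simp only [mul_neg, neg_smul, smul_neg, neg_neg, mul_assoc]

noncomputable def topCoeff (n : ℕ) : ExteriorAlgebra R (Fin n → R) →ₗ[R] R :=
  liftAlternating fun i => if h : i = n then h ▸ Matrix.detRowAlternating else 0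

theorem topCoeff_ιMulti {n : ℕ} (v : Fin n → Fin n → R) :
    topCoeff n (ιMulti R n v) = (Matrix.of v).det := by
  rw [topCoeff, liftAlternating_apply_ιMulti, dif_pos rfl]
  rfl

theorem smul_ιMulti_single_inj {n : ℕ} {r s : R} :
    r • ιMulti R n (fun i => Pi.single i (1 : R)) =
        s • ιMulti R n (fun i => Pi.single i (1 : R)) ↔ r = s := by
  refine ⟨fun h => ?_, fun h => h ▸ rfl⟩
  have hone : (Matrix.of fun i : Fin n => (Pi.single i 1 : Fin n → R)) = 1 := by
    ext i j
    rw [Matrix.one_eq_pi_single]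
    rfl
  simpa [topCoeff_ιMulti, hone] using congrArg (topCoeff n) h

end ExteriorAlgebra

open ExteriorAlgebra

/-- if ε is the coefficient of x∧y∧z∧w in φ₁₁∧φ₂₂∧φ₁₂∧φ₂₁ for
φ = [[x+aw, y+bw],[z+cw, x+dw]], then ε² equals ρ(φ), the determinant of the
matrix of second partial derivatives of det(φ). -/
theorem epsilon_sq_eq_rho (a b c d : ℂ) (ε : ℂ)
    (hε :
      let V := Fin 4 → ℂ
      let x : V := Pi.single 0 1
      let y : V := Pi.single 1 1
      let z : V := Pi.single 2 1
      let w : V := Pi.single 3 1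
      ι ℂ (x + a • w) * ι ℂ (x + d • w) * ι ℂ (y + b • w) * ι ℂ (z + c • w) =
        ε • (ι ℂ x * ι ℂ y * ι ℂ z * ι ℂ w)) :
    ε ^ 2 = Matrix.det !![(2 : ℂ), 0, 0, a + d;
                          0, 0, -1, -c;
                          0, -1, 0, -b;
                          a + d, -c, -b, 2 * (a * d - b * c)] := by
  have hbasis : ι ℂ (Pi.single 0 1 : Fin 4 → ℂ) * ι ℂ (Pi.single 1 1) * ι ℂ (Pi.single 2 1) *
      ι ℂ (Pi.single 3 1) = ιMulti ℂ 4 fun i => Pi.single i 1 := by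
    simp only [ιMulti_apply, List.ofFn_succ, List.ofFn_zero, List.prod_cons, List.prod_nil,
      mul_one, mul_assoc]
    rfl
  dsimp only at hε
  rw [ι_add_smul_mul_ι_add_smul_mul_four, hbasis, smul_ιMulti_single_inj] at hε
  subst hε
  simp [Matrix.det_succ_row_zero, Fin.sum_univ_succ, Fin.succAbove]
  ring
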